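/- Let q, z ∈ ℂ with q ≠ 0. Then the matrix-valued function c ↦ c⁻¹·R^Δ_{c,q}(−qz) converges, as |c| → ∞ (i.e., along the cobounded filter on ℂ), to the 4×4 matrix D(q,z) := [[1,0,0,0],[0,−q⁻¹,−(1−q²)z,0],[0,−1,−qz,0],[0,0,0,q²z]]. Moreover, the matrix obtained from D(q,z) by negating every entry except the (1,1)-entry is exactly the matrix of Δ Tokuyama ice Boltzmann weights (a₁,a₂,b₁,b₂,c₁,c₂) = (1, −q²z, q⁻¹, qz, (1−q²)z, 1) with v = q², arranged with diagonal (a₁, b₁, b₂, a₂) and with c₁ in position (2,3) and c₂ in position (3,2). -/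

import Mathlib

open Matrix Filter Bornology

/-- The R-matrix `R^Δ_{c,q}(z)` (a change-of-variables and Drinfeld-twist form of the R-matrix
coming from the `U_q(ĝl(1|1))`-representation `π_{c,c⁻¹}`). -/
noncomputable def RDel (c q z : ℂ) : Matrix (Fin 4) (Fin 4) ℂ :=
  !![c - z, 0,                 0,                       0;
     0,     -(c * q⁻¹) + z * q, (q⁻¹ - q) * (c - 1) * z, 0;
     0,     -(c + 1),           z * c - 1,               0;
     0,     0,                 0,                       q⁻¹ - z * c * q]

/-- The limiting matrix `D(q,z)`. -/
noncomputable def Dlim (q z : ℂ) : Matrix (Fin 4) (Fin 4) ℂ :=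
  !![1, 0,    0,                 0;
     0, -q⁻¹, -((1 - q ^ 2) * z), 0;
     0, -1,   -(q * z),           0;
     0, 0,    0,                 q ^ 2 * z]

/-- Negate every entry of a `4×4` matrix except the `(1,1)`-entry (index `(0,0)`). -/
def negExcept00 (A : Matrix (Fin 4) (Fin 4) ℂ) : Matrix (Fin 4) (Fin 4) ℂ :=
  Matrix.of fun i j => if i = 0 ∧ j = 0 then A i j else -(A i j)

/-- The matrix of Δ Tokuyama ice Boltzmann weights `(a₁,a₂,b₁,b₂,c₁,c₂)`, arranged with
diagonal `(a₁, b₁, b₂, a₂)`, `c₁` in position `(2,3)` and `c₂` in position `(3,2)`. -/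
def wtMat (a₁ a₂ b₁ b₂ c₁ c₂ : ℂ) : Matrix (Fin 4) (Fin 4) ℂ :=
  !![a₁, 0,  0,  0;
     0,  b₁, c₁, 0;
     0,  c₂, b₂, 0;
     0,  0,  0,  a₂]

theorem tendsto_inv_smul_smul_add_cobounded {𝕜 E : Type*} [NormedDivisionRing 𝕜]
    [AddCommGroup E] [Module 𝕜 E] [TopologicalSpace E] [ContinuousAdd E] [ContinuousSMul 𝕜 E]
    (A B : E) : Tendsto (fun c : 𝕜 => c⁻¹ • (c • A + B)) (cobounded 𝕜) (nhds A) := by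
  have hlim : Tendsto (fun c : 𝕜 => A + c⁻¹ • B) (cobounded 𝕜) (nhds A) := by
    simpa using tendsto_const_nhds.add ((tendsto_inv₀_cobounded (α := 𝕜)).smul_const B)
  refine hlim.congr' ?_
  filter_upwards [eventually_ne_cobounded 0] with c hc
  rw [smul_add, inv_smul_smul₀ hc]

theorem RDel_neg_mul_eq_smul_Dlim_add (c : ℂ) {q : ℂ} (hq : q ≠ 0) (z : ℂ) :
    RDel c q (-(q * z)) = c • Dlim q z +
      !![q * z, 0,          0,               0;
         0,     -(q ^ 2 * z), (1 - q ^ 2) * z, 0;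
         0,     -1,          -1,              0;
         0,     0,           0,               q⁻¹] := by
  ext i j
  fin_cases i <;> fin_cases j <;> simp [RDel, Dlim] <;> field_simp <;> ring

theorem negExcept00_Dlim (q z : ℂ) :
    negExcept00 (Dlim q z) = wtMat 1 (-(q ^ 2 * z)) q⁻¹ (q * z) ((1 - q ^ 2) * z) 1 := by
  ext i j
  fin_cases i <;> fin_cases j <;> simp [negExcept00, Dlim, wtMat]

theorem stmt19 (q z : ℂ) (hq : q ≠ 0) :
    Tendsto (fun c : ℂ => c⁻¹ • RDel c q (-(q * z))) (cobounded ℂ) (nhds (Dlim q z)) ∧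
    negExcept00 (Dlim q z) =
      wtMat 1 (-(q ^ 2 * z)) q⁻¹ (q * z) ((1 - q ^ 2) * z) 1 := by
  simp_rw [RDel_neg_mul_eq_smul_Dlim_add _ hq]
  exact ⟨tendsto_inv_smul_smul_add_cobounded _ _, negExcept00_Dlim q z⟩
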